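/- For all 0 ≤ k ≤ n, the uniform matroid U_{n,k} is 2-level, i.e., Lev(V_{U_{n,k}}) ≤ 2; consequently its Theta rank is at most 1. -/

import Mathlib

open MvPolynomial Set

noncomputable section

/-- `f` is an affine-linear polynomial (degree at most one). -/
def IsAffLin {ι : Type} (f : MvPolynomial ι ℝ) : Prop := f.totalDegree ≤ 1

/-- `f` is nonnegative on `V`. -/
def NonnegOn {ι : Type} (V : Set (ι → ℝ)) (f : MvPolynomial ι ℝ) : Prop :=
  ∀ v ∈ V, 0 ≤ eval v f

/-- `ℓ` is `k`-sos with respect to `V`: on `V` it agrees with a sum of squares of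
polynomials of degree at most `k`. -/
def IsKSos {ι : Type} (V : Set (ι → ℝ)) (k : ℕ) (ℓ : MvPolynomial ι ℝ) : Prop :=
  ∃ (s : ℕ) (h : Fin s → MvPolynomial ι ℝ),
    (∀ i, (h i).totalDegree ≤ k) ∧ ∀ v ∈ V, eval v ℓ = ∑ i, (eval v (h i)) ^ 2

/-- The Theta rank of a point configuration `V`. -/
def thetaRank {ι : Type} (V : Set (ι → ℝ)) : ℕ :=
  sInf {k | ∀ ℓ, IsAffLin ℓ → NonnegOn V ℓ → IsKSos V k ℓ}

/-- `F` is a face of `V`. -/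
def IsFaceOf {ι : Type} (V F : Set (ι → ℝ)) : Prop :=
  ∃ g, IsAffLin g ∧ NonnegOn V g ∧ F = {v ∈ V | eval v g = 0}

/-- `F` is a facet of `V`: an inclusion-maximal proper face. -/
def IsFacetOf {ι : Type} (V F : Set (ι → ℝ)) : Prop :=
  IsFaceOf V F ∧ F ≠ V ∧ ∀ F', IsFaceOf V F' → F' ≠ V → F ⊆ F' → F' = F

/-- `ℓ` is a facet-defining affine-linear function for `V`. -/
def IsFacetDefining {ι : Type} (V : Set (ι → ℝ)) (ℓ : MvPolynomial ι ℝ) : Prop :=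
  IsAffLin ℓ ∧ NonnegOn V ℓ ∧ IsFacetOf V {v ∈ V | eval v ℓ = 0}

/-- The levelness of a point configuration `V`. -/
def levelness {ι : Type} (V : Set (ι → ℝ)) : ℕ :=
  sInf {k | ∀ ℓ, IsFacetDefining V ℓ → ((fun v => eval v ℓ) '' V).ncard ≤ k}

/-- The base configuration of a matroid: the 0/1 indicator vectors of its bases. -/
def baseConfig {α : Type} (M : Matroid α) : Set (α → ℝ) :=
  {x | ∃ B, M.IsBase B ∧ x = Set.indicator B 1}

/-! On the vertex `1_S` of the hypersimplex an affine `ℓ = c₀ + ∑ cᵢ xᵢ` takes the value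
`c₀ + ∑_{i ∈ S} cᵢ`, and every vertex satisfies `xᵢ² = xᵢ` and `∑ xᵢ = k`.

Theta rank: if `ℓ ≥ 0` on the vertices, let `S₀` minimise `∑_{i ∈ S} cᵢ` and pick a threshold `θ`
between the values of `c` on `S₀` and off `S₀`. Then on the vertices
`ℓ = ℓ(1_{S₀}) + ∑ (cᵢ - θ)⁺ xᵢ + ∑ (θ - cᵢ)⁺ (1 - xᵢ)`, a sum of squares of affine functions.

Levelness: a zero `1_S` of a nonnegative `ℓ` minimises `∑_{i ∈ S} cᵢ`, so `cᵢ ≤ cⱼ` for `i ∈ S`,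
`j ∉ S`. If every coordinate were both used and avoided by zeros of `ℓ`, `c` would be constant and
`ℓ` would vanish identically. So a facet lies in a coordinate face `{xᵢ = 1}` or `{xᵢ = 0}`, and by
maximality equals it; exchanges inside that face force `cⱼ` to be constant for `j ≠ i`, so `ℓ`
only depends on `xᵢ`.
-/

theorem Finsupp.eq_zero_or_eq_single_one_of_degree_le_one {σ : Type*} {m : σ →₀ ℕ}
    (hm : m.degree ≤ 1) : m = 0 ∨ ∃ i, m = Finsupp.single i 1 := by
  rcases Nat.le_one_iff_eq_zero_or_eq_one.mp hm with h | h
  · exact .inl ((Finsupp.degree_eq_zero_iff m).mp h)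
  · exact .inr ((Finsupp.sum_eq_one_iff m).mp h)

theorem MvPolynomial.eval_eq_of_totalDegree_le_one {R σ : Type*} [CommSemiring R] [Fintype σ]
    [DecidableEq σ] {f : MvPolynomial σ R} (hf : f.totalDegree ≤ 1) (v : σ → R) :
    eval v f = coeff 0 f + ∑ i, coeff (Finsupp.single i 1) f * v i := by
  have hsupp : f.support ⊆ insert 0 (Finset.univ.image fun i => Finsupp.single i 1) := by
    intro m hm
    rcases Finsupp.eq_zero_or_eq_single_one_of_degree_le_one ((le_totalDegree hm).trans hf) with
      rfl | ⟨i, rfl⟩ <;> simp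
  rw [eval_eq', Finset.sum_subset hsupp fun m _ hm => by rw [notMem_support_iff.mp hm, zero_mul],
    Finset.sum_insert (by simp),
    Finset.sum_image fun _ _ _ _ h => Finsupp.single_left_injective one_ne_zero h]
  simp [Finsupp.single_apply, pow_ite]

namespace IsKSos

variable {ι : Type} {V : Set (ι → ℝ)} {k : ℕ} {f g : MvPolynomial ι ℝ}

theorem congr (hf : IsKSos V k f) (hfg : ∀ v ∈ V, eval v f = eval v g) : IsKSos V k g := by
  obtain ⟨s, h, hdeg, hsum⟩ := hf
  exact ⟨s, h, hdeg, fun v hv => (hfg v hv).symm.trans (hsum v hv)⟩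

theorem zero : IsKSos V k 0 := ⟨0, Fin.elim0, Fin.rec0, by simp⟩

theorem add (hf : IsKSos V k f) (hg : IsKSos V k g) : IsKSos V k (f + g) := by
  obtain ⟨s, h, hdeg, hsum⟩ := hf
  obtain ⟨t, h', hdeg', hsum'⟩ := hg
  refine ⟨s + t, Fin.append h h', Fin.addCases (by simpa using hdeg) (by simpa using hdeg'),
    fun v hv => ?_⟩
  simp [Fin.sum_univ_add, hsum v hv, hsum' v hv]

theorem sum {β : Type*} (s : Finset β) {f : β → MvPolynomial ι ℝ} (h : ∀ i ∈ s, IsKSos V k (f i)) :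
    IsKSos V k (∑ i ∈ s, f i) :=
  Finset.sum_induction _ _ (fun _ _ => add) zero h

theorem sq {p : MvPolynomial ι ℝ} (hp : p.totalDegree ≤ k) : IsKSos V k (p ^ 2) :=
  ⟨1, fun _ => p, fun _ => hp, by simp⟩

end IsKSos

theorem isKSos_C_mul {ι : Type} {V : Set (ι → ℝ)} {k : ℕ} {p : MvPolynomial ι ℝ} {a : ℝ}
    (hp : p.totalDegree ≤ k) (hV : ∀ v ∈ V, eval v p = 0 ∨ eval v p = 1) (ha : 0 ≤ a) :
    IsKSos V k (C a * p) := by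
  have hdeg : (C √a * p).totalDegree ≤ k := (totalDegree_mul _ _).trans (by simpa using hp)
  refine (IsKSos.sq hdeg).congr fun v hv => ?_
  rcases hV v hv with h | h <;> simp [mul_pow, Real.sq_sqrt ha, h]

section FinsetSums

variable {ι : Type} {k : ℕ}

theorem Finset.sum_insert_erase_eq [DecidableEq ι] {S : Finset ι} {i j : ι} (hi : i ∈ S)
    (hj : j ∉ S) (c : ι → ℝ) :
    ∑ x ∈ insert j (S.erase i), c x = ∑ x ∈ S, c x - c i + c j := by
  rw [Finset.sum_insert fun h => hj (Finset.mem_of_mem_erase h), Finset.sum_erase_eq_sub hi]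
  ring

theorem le_of_sum_le_of_mem_of_notMem [DecidableEq ι] {S : Finset ι} {c : ι → ℝ}
    (hS : ∀ T : Finset ι, T.card = S.card → ∑ x ∈ S, c x ≤ ∑ x ∈ T, c x) {i j : ι}
    (hi : i ∈ S) (hj : j ∉ S) : c i ≤ c j := by
  have := hS (insert j (S.erase i)) (by
    rw [Finset.card_insert_of_notMem fun h => hj (Finset.mem_of_mem_erase h),
      Finset.card_erase_of_mem hi, Nat.sub_add_cancel (Finset.card_pos.2 ⟨i, hi⟩)])
  rw [Finset.sum_insert_erase_eq hi hj] at this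
  linarith

theorem le_of_sum_le_of_mem_of_notMem_of_card_eq [DecidableEq ι] {c : ι → ℝ} {S T : Finset ι}
    (hST : S.card = T.card)
    (hS : ∀ U : Finset ι, U.card = S.card → ∑ x ∈ S, c x ≤ ∑ x ∈ U, c x)
    (hT : ∀ U : Finset ι, U.card = T.card → ∑ x ∈ T, c x ≤ ∑ x ∈ U, c x)
    {i j : ι} (hi : i ∈ S) (hj : j ∉ T) : c i ≤ c j := by
  by_cases hjS : j ∈ S
  · obtain ⟨y, hyT, hyS⟩ : ∃ y ∈ T, y ∉ S := by
      by_contra! hTS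
      exact hj (by rwa [Finset.eq_of_subset_of_card_le hTS hST.le])
    exact (le_of_sum_le_of_mem_of_notMem hS hi hyS).trans
      (le_of_sum_le_of_mem_of_notMem hT hyT hj)
  · exact le_of_sum_le_of_mem_of_notMem hS hi hjS

theorem exists_forall_sum_eq_or_eq_of_forall_ne_eq [DecidableEq ι] {c : ι → ℝ} {i : ι} {a : ℝ}
    (hc : ∀ j, j ≠ i → c j = a) (k : ℕ) :
    ∃ x y : ℝ, ∀ S : Finset ι, S.card = k → ∑ j ∈ S, c j = x ∨ ∑ j ∈ S, c j = y := by
  refine ⟨k * a, k * a + (c i - a), fun S hS => ?_⟩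
  have hc' : ∀ j, c j = a + if j = i then c i - a else 0 := fun j => by
    by_cases h : j = i
    · simp [h]
    · simp [h, hc j h]
  rw [Finset.sum_congr rfl fun j _ => hc' j, Finset.sum_add_distrib, Finset.sum_const,
    Finset.sum_ite_eq', nsmul_eq_mul, hS]
  split_ifs
  exacts [.inr rfl, .inl (add_zero _)]

theorem exists_card_eq_and_mem [Fintype ι] (hk0 : 0 < k) (hkn : k ≤ Fintype.card ι) (i : ι) :
    ∃ S : Finset ι, S.card = k ∧ i ∈ S := by
  obtain ⟨S, hiS, -, hS⟩ := Finset.exists_subsuperset_card_eq (n := k)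
    (Finset.singleton_subset_iff.2 (Finset.mem_univ i)) (by rwa [Finset.card_singleton])
    (by simpa using hkn)
  exact ⟨S, hS, hiS (Finset.mem_singleton_self i)⟩

theorem exists_card_eq_and_notMem [Fintype ι] [DecidableEq ι] (hkn : k < Fintype.card ι) (i : ι) :
    ∃ S : Finset ι, S.card = k ∧ i ∉ S := by
  obtain ⟨S, hS, hSk⟩ := Finset.exists_subset_card_eq (s := Finset.univ.erase i) (n := k)
    (by rw [Finset.card_erase_of_mem (Finset.mem_univ i), Finset.card_univ]; omega)
  exact ⟨S, hSk, fun h => by simpa using hS h⟩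

theorem exists_separating_of_forall_le {A B : Finset ι} {c : ι → ℝ}
    (h : ∀ a ∈ A, ∀ b ∈ B, c a ≤ c b) : ∃ θ, (∀ a ∈ A, c a ≤ θ) ∧ ∀ b ∈ B, θ ≤ c b := by
  rcases A.eq_empty_or_nonempty with rfl | hA
  · obtain ⟨θ, hθ⟩ := (B.image c).bddBelow
    exact ⟨θ, by simp, fun b hb => hθ (Finset.mem_coe.2 (Finset.mem_image_of_mem c hb))⟩
  · obtain ⟨a, ha, hmax⟩ := A.exists_max_image c hA
    exact ⟨c a, hmax, h a ha⟩

theorem exists_nonneg_decomposition [Fintype ι] [DecidableEq ι] (hk : k ≤ Fintype.card ι)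
    (c₀ : ℝ) (c : ι → ℝ)
    (hnn : ∀ S : Finset ι, S.card = k → 0 ≤ c₀ + ∑ i ∈ S, c i) :
    ∃ (m : ℝ) (a b : ι → ℝ), 0 ≤ m ∧ (∀ i, 0 ≤ a i) ∧ (∀ i, 0 ≤ b i) ∧
      ∀ S : Finset ι, S.card = k → c₀ + ∑ i ∈ S, c i = m + ∑ i ∈ S, a i + ∑ i ∈ Sᶜ, b i := by
  obtain ⟨S₀, hS₀, hmin⟩ := Finset.exists_min_image (Finset.powersetCard k Finset.univ)
    (fun S => ∑ i ∈ S, c i) (Finset.powersetCard_nonempty.2 (by simpa using hk))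
  have hS₀k : S₀.card = k := (Finset.mem_powersetCard.1 hS₀).2
  have hS₀min : ∀ T : Finset ι, T.card = S₀.card → ∑ x ∈ S₀, c x ≤ ∑ x ∈ T, c x :=
    fun T hT => hmin T (Finset.mem_powersetCard.2 ⟨Finset.subset_univ T, hT.trans hS₀k⟩)
  obtain ⟨θ, hθ₁, hθ₂⟩ := exists_separating_of_forall_le (A := S₀) (B := S₀ᶜ) (c := c)
    fun i hi j hj => le_of_sum_le_of_mem_of_notMem hS₀min hi (Finset.mem_compl.1 hj)
  -- `c = θ + a - b` with `a` vanishing on `S₀` and `b` vanishing off `S₀`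
  set a : ι → ℝ := fun i => max (c i - θ) 0
  set b : ι → ℝ := fun i => max (θ - c i) 0
  have hcab : ∀ i, c i = θ + a i - b i := by
    intro i
    rcases le_total (c i) θ with h | h <;> simp [a, b, h]
  have hsum : ∀ S : Finset ι, S.card = k →
      ∑ i ∈ S, c i = k * θ + ∑ i ∈ S, a i - ∑ i ∈ S, b i := by
    intro S hS
    rw [Finset.sum_congr rfl fun i _ => hcab i, Finset.sum_sub_distrib, Finset.sum_add_distrib,
      Finset.sum_const, hS, nsmul_eq_mul]
  have ha : ∑ i ∈ S₀, a i = 0 :=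
    Finset.sum_eq_zero fun i hi => max_eq_right (by linarith [hθ₁ i hi])
  have hb : ∑ i ∈ S₀ᶜ, b i = 0 :=
    Finset.sum_eq_zero fun i hi => max_eq_right (by linarith [hθ₂ i hi])
  refine ⟨c₀ + ∑ i ∈ S₀, c i, a, b, hnn S₀ hS₀k, fun i => le_max_right _ _,
    fun i => le_max_right _ _, fun S hS => ?_⟩
  have := Finset.sum_add_sum_compl S b
  have := Finset.sum_add_sum_compl S₀ b
  linarith [hsum S hS, hsum S₀ hS₀k]

end FinsetSums

section ZeroSets

variable {ι : Type} {k : ℕ} {c₀ : ℝ} {c : ι → ℝ} {L : Finset ι → ℝ}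

theorem sum_le_sum_of_eq_zero (hL : ∀ S, L S = c₀ + ∑ x ∈ S, c x)
    (hnn : ∀ S : Finset ι, S.card = k → 0 ≤ L S) {S : Finset ι} (hS : S.card = k)
    (hS0 : L S = 0) :
    ∀ U : Finset ι, U.card = S.card → ∑ x ∈ S, c x ≤ ∑ x ∈ U, c x := fun U hU => by
  linarith [hL S, hL U, hnn U (hU.trans hS)]

theorem exists_forall_mem_or_forall_notMem [DecidableEq ι] [Nonempty ι]
    (hL : ∀ S, L S = c₀ + ∑ x ∈ S, c x)
    (hnn : ∀ S : Finset ι, S.card = k → 0 ≤ L S) (hne : ∃ S : Finset ι, S.card = k ∧ L S ≠ 0) :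
    ∃ i, (∀ S : Finset ι, S.card = k → L S = 0 → i ∈ S) ∨
      (∀ S : Finset ι, S.card = k → L S = 0 → i ∉ S) := by
  by_contra! h
  have hle : ∀ i j, c i ≤ c j := by
    intro i j
    obtain ⟨S, hS, hS0, hiS⟩ := (h i).2
    obtain ⟨T, hT, hT0, hjT⟩ := (h j).1
    exact le_of_sum_le_of_mem_of_notMem_of_card_eq (hS.trans hT.symm)
      (sum_le_sum_of_eq_zero hL hnn hS hS0) (sum_le_sum_of_eq_zero hL hnn hT hT0) hiS hjT
  obtain ⟨i₀⟩ := ‹Nonempty ι›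
  have hsum : ∀ U : Finset ι, ∑ x ∈ U, c x = U.card • c i₀ := fun U =>
    (Finset.sum_congr rfl fun j _ => le_antisymm (hle j i₀) (hle i₀ j)).trans (Finset.sum_const _)
  obtain ⟨S₀, hS₀, hS₀0, -⟩ := (h i₀).1
  obtain ⟨T, hT, hT0⟩ := hne
  rw [hL, hsum, hT, ← hS₀, ← hsum, ← hL] at hT0
  exact hT0 hS₀0

theorem exists_zero_mem_notMem_of_forall_mem [Fintype ι] [DecidableEq ι] (hk0 : 0 < k)
    (hkn : k < Fintype.card ι)
    (hnotMem : ∀ i, (∀ S : Finset ι, S.card = k → L S = 0 → i ∉ S) →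
      ∀ S : Finset ι, S.card = k → i ∉ S → L S = 0)
    {i : ι} (hin : ∀ S : Finset ι, S.card = k → L S = 0 → i ∈ S)
    (hZ : ∀ S : Finset ι, S.card = k → i ∈ S → L S = 0)
    {j j' : ι} (hj : j ≠ i) (hj' : j' ≠ i) (hjj' : j ≠ j') :
    ∃ S : Finset ι, S.card = k ∧ L S = 0 ∧ j ∈ S ∧ j' ∉ S := by
  rcases Nat.lt_or_ge k 2 with hk | hk
  · -- the only zero set is `{i}`, so the zero sets avoid `j'`, and `{j}` is one of them
    have hk1 : k = 1 := by omega
    subst hk1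
    have hout : ∀ S : Finset ι, S.card = 1 → L S = 0 → j' ∉ S := fun S hS hS0 => by
      obtain ⟨x, rfl⟩ := Finset.card_eq_one.1 hS
      rw [← Finset.mem_singleton.1 (hin _ hS hS0)]
      simpa using hj'
    have hj'j : j' ∉ ({j} : Finset ι) := by simpa using hjj'.symm
    exact ⟨{j}, rfl, hnotMem j' hout _ rfl hj'j, Finset.mem_singleton_self j, hj'j⟩
  · obtain ⟨S, hijS, hSj', hS⟩ := Finset.exists_subsuperset_card_eq (n := k) (s := {i, j})
      (t := Finset.univ.erase j') (by simp [Finset.insert_subset_iff, hjj', hj'.symm])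
      (by rw [Finset.card_pair hj.symm]; exact hk)
      (by rw [Finset.card_erase_of_mem (Finset.mem_univ _), Finset.card_univ]; omega)
    exact ⟨S, hS, hZ S hS (hijS (by simp)), hijS (by simp), fun h => by simpa using hSj' h⟩

theorem exists_zero_mem_notMem_of_forall_notMem [Fintype ι] [DecidableEq ι] (hk0 : 0 < k)
    (hkn : k < Fintype.card ι)
    (hmem : ∀ i, (∀ S : Finset ι, S.card = k → L S = 0 → i ∈ S) →
      ∀ S : Finset ι, S.card = k → i ∈ S → L S = 0)
    {i : ι} (hout : ∀ S : Finset ι, S.card = k → L S = 0 → i ∉ S)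
    (hZ : ∀ S : Finset ι, S.card = k → i ∉ S → L S = 0)
    {j j' : ι} (hj : j ≠ i) (hj' : j' ≠ i) (hjj' : j ≠ j') :
    ∃ S : Finset ι, S.card = k ∧ L S = 0 ∧ j ∈ S ∧ j' ∉ S := by
  have hcard : ∀ x : ι, (Finset.univ.erase x).card = Fintype.card ι - 1 := fun x => by
    rw [Finset.card_erase_of_mem (Finset.mem_univ _), Finset.card_univ]
  rcases Nat.lt_or_ge (k + 1) (Fintype.card ι) with hk | hk
  · obtain ⟨S, hjS, hS, hSk⟩ := Finset.exists_subsuperset_card_eq (n := k) (s := {j})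
      (t := (Finset.univ.erase i).erase j') (by simp [hjj', hj])
      (by rw [Finset.card_singleton]; omega)
      (by rw [Finset.card_erase_of_mem (by simpa using hj'), hcard]; omega)
    exact ⟨S, hSk, hZ S hSk fun h => by simpa using hS h, hjS (Finset.mem_singleton_self j),
      fun h => by simpa using hS h⟩
  · -- the only zero set is `univ.erase i`, so the zero sets contain `j`
    have hin : ∀ S : Finset ι, S.card = k → L S = 0 → j ∈ S := fun S hS hS0 => by
      have hSi : S ⊆ Finset.univ.erase i := fun x hx =>
        Finset.mem_erase.2 ⟨fun h => hout S hS hS0 (h ▸ hx), Finset.mem_univ x⟩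
      rw [Finset.eq_of_subset_of_card_le hSi (by rw [hcard]; omega)]
      simpa using hj
    have hSk : (Finset.univ.erase j').card = k := by rw [hcard]; omega
    exact ⟨_, hSk, hmem j hin _ hSk (by simpa using hjj'), by simpa using hjj', by simp⟩

theorem exists_forall_ne_eq_of_maximal [Fintype ι] [DecidableEq ι] (hk0 : 0 < k)
    (hkn : k < Fintype.card ι) (hL : ∀ S, L S = c₀ + ∑ x ∈ S, c x)
    (hnn : ∀ S : Finset ι, S.card = k → 0 ≤ L S) (hne : ∃ S : Finset ι, S.card = k ∧ L S ≠ 0)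
    (hmem : ∀ i, (∀ S : Finset ι, S.card = k → L S = 0 → i ∈ S) →
      ∀ S : Finset ι, S.card = k → i ∈ S → L S = 0)
    (hnotMem : ∀ i, (∀ S : Finset ι, S.card = k → L S = 0 → i ∉ S) →
      ∀ S : Finset ι, S.card = k → i ∉ S → L S = 0) :
    ∃ i, ∀ j j', j ≠ i → j' ≠ i → c j = c j' := by
  suffices h : ∃ i, ∀ j j', j ≠ i → j' ≠ i → j ≠ j' →
      ∃ S : Finset ι, S.card = k ∧ L S = 0 ∧ j ∈ S ∧ j' ∉ S by
    obtain ⟨i, hi⟩ := h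
    have hle : ∀ j j', j ≠ i → j' ≠ i → j ≠ j' → c j ≤ c j' := fun j j' hj hj' hjj' => by
      obtain ⟨S, hS, hS0, hjS, hj'S⟩ := hi j j' hj hj' hjj'
      exact le_of_sum_le_of_mem_of_notMem (sum_le_sum_of_eq_zero hL hnn hS hS0) hjS hj'S
    refine ⟨i, fun j j' hj hj' => ?_⟩
    rcases eq_or_ne j j' with rfl | hjj'
    · rfl
    · exact (hle j j' hj hj' hjj').antisymm (hle j' j hj' hj hjj'.symm)
  have : Nonempty ι := Fintype.card_pos_iff.1 (hk0.trans hkn)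
  obtain ⟨i, hin | hout⟩ := exists_forall_mem_or_forall_notMem hL hnn hne
  · exact ⟨i, fun j j' => exists_zero_mem_notMem_of_forall_mem hk0 hkn hnotMem hin (hmem i hin)⟩
  · exact ⟨i, fun j j' =>
      exists_zero_mem_notMem_of_forall_notMem hk0 hkn hmem hout (hnotMem i hout)⟩

end ZeroSets

section Hypersimplex

variable {ι : Type} {k : ℕ}

def finsetIndicator (S : Finset ι) : ι → ℝ := Set.indicator (↑S) 1

theorem finsetIndicator_apply [DecidableEq ι] (S : Finset ι) (i : ι) :
    finsetIndicator S i = if i ∈ S then 1 else 0 := by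
  simp [finsetIndicator, Set.indicator_apply]

theorem finsetIndicator_injective : Function.Injective (finsetIndicator (ι := ι)) :=
  fun _ _ h => Finset.coe_injective (Set.indicator_one_inj ℝ h)

variable (ι k) in
def hypersimplexVertices : Set (ι → ℝ) := finsetIndicator '' {S | S.card = k}

theorem baseConfig_eq_hypersimplexVertices [Finite ι] {M : Matroid ι}
    (hB : ∀ B, M.IsBase B ↔ B.ncard = k) : baseConfig M = hypersimplexVertices ι k := by
  ext v
  constructor
  · rintro ⟨B, hBase, rfl⟩
    refine ⟨B.toFinite.toFinset, ?_, by simp [finsetIndicator]⟩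
    change _ = k
    rw [← Set.ncard_coe_finset, Set.Finite.coe_toFinset, ← hB]
    exact hBase
  · rintro ⟨S, hS, rfl⟩
    exact ⟨S, (hB S).2 (by simpa using hS), rfl⟩

theorem sep_hypersimplexVertices (p : (ι → ℝ) → Prop) :
    {v ∈ hypersimplexVertices ι k | p v} =
      finsetIndicator '' {S | S.card = k ∧ p (finsetIndicator S)} := by
  ext v
  simp only [hypersimplexVertices, Set.mem_ofPred_eq, Set.mem_image]
  aesop

theorem eval_finsetIndicator [Fintype ι] [DecidableEq ι] {ℓ : MvPolynomial ι ℝ} (hℓ : IsAffLin ℓ)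
    (S : Finset ι) :
    eval (finsetIndicator S) ℓ = coeff 0 ℓ + ∑ i ∈ S, coeff (Finsupp.single i 1) ℓ := by
  simp [eval_eq_of_totalDegree_le_one hℓ, finsetIndicator_apply]

theorem isKSos_one_hypersimplexVertices [Fintype ι] [DecidableEq ι] (hk : k ≤ Fintype.card ι)
    {ℓ : MvPolynomial ι ℝ} (hℓ : IsAffLin ℓ) (hnn : NonnegOn (hypersimplexVertices ι k) ℓ) :
    IsKSos (hypersimplexVertices ι k) 1 ℓ := by
  obtain ⟨m, a, b, hm, ha, hb, hdec⟩ := exists_nonneg_decomposition hk _ _ fun S hS => by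
    rw [← eval_finsetIndicator hℓ]
    exact hnn _ ⟨S, hS, rfl⟩
  have h01 : ∀ v ∈ hypersimplexVertices ι k, ∀ i, v i = 0 ∨ v i = 1 := by
    rintro _ ⟨S, -, rfl⟩ i
    rw [finsetIndicator_apply]
    split_ifs <;> simp
  have hsos : IsKSos (hypersimplexVertices ι k) 1
      (C m * 1 + ∑ i, (C (a i) * X i + C (b i) * (1 - X i))) := by
    refine (isKSos_C_mul (by simp) (by simp) hm).add (IsKSos.sum _ fun i _ => ?_)
    refine (isKSos_C_mul (by simp) (fun v hv => by simpa using h01 v hv i) (ha i)).add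
      (isKSos_C_mul ((totalDegree_sub _ _).trans (by simp)) (fun v hv => ?_) (hb i))
    rcases h01 v hv i with h | h <;> simp [h]
  refine hsos.congr ?_
  rintro _ ⟨S, hS, rfl⟩
  rw [eval_finsetIndicator hℓ, hdec S hS]
  simp only [map_add, map_mul, map_sub, map_sum, eval_C, eval_X, finsetIndicator_apply,
    mul_one, mul_sub, mul_ite, mul_zero, Finset.sum_add_distrib, Finset.sum_sub_distrib,
    Finset.sum_ite_mem, Finset.univ_inter]
  linarith [Finset.sum_add_sum_compl S b]

theorem thetaRank_hypersimplexVertices_le_one [Fintype ι] [DecidableEq ι]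
    (hk : k ≤ Fintype.card ι) :
    thetaRank (hypersimplexVertices ι k) ≤ 1 :=
  Nat.sInf_le fun _ hℓ hnn => isKSos_one_hypersimplexVertices hk hℓ hnn

theorem isFaceOf_hypersimplexVertices_mem [DecidableEq ι] (i : ι) :
    IsFaceOf (hypersimplexVertices ι k) (finsetIndicator '' {S | S.card = k ∧ i ∈ S}) := by
  refine ⟨1 - X i, (totalDegree_sub _ _).trans (by simp), ?_, ?_⟩
  · rintro _ ⟨S, -, rfl⟩
    by_cases h : i ∈ S <;> simp [finsetIndicator_apply, h]
  · rw [sep_hypersimplexVertices]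
    congr 1
    ext S
    by_cases h : i ∈ S <;> simp [finsetIndicator_apply, h]

theorem isFaceOf_hypersimplexVertices_notMem [DecidableEq ι] (i : ι) :
    IsFaceOf (hypersimplexVertices ι k) (finsetIndicator '' {S | S.card = k ∧ i ∉ S}) := by
  refine ⟨X i, by simp [IsAffLin], ?_, ?_⟩
  · rintro _ ⟨S, -, rfl⟩
    by_cases h : i ∈ S <;> simp [finsetIndicator_apply, h]
  · rw [sep_hypersimplexVertices]
    congr 1
    ext S
    by_cases h : i ∈ S <;> simp [finsetIndicator_apply, h]

theorem IsFacetDefining.forall_eq_zero_of_forall_imp {ℓ : MvPolynomial ι ℝ}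
    (hℓ : IsFacetDefining (hypersimplexVertices ι k) ℓ) {P : Finset ι → Prop}
    (hP : IsFaceOf (hypersimplexVertices ι k) (finsetIndicator '' {S | S.card = k ∧ P S}))
    (hPV : ∃ S : Finset ι, S.card = k ∧ ¬ P S)
    (hZP : ∀ S : Finset ι, S.card = k → eval (finsetIndicator S) ℓ = 0 → P S) :
    ∀ S : Finset ι, S.card = k → P S → eval (finsetIndicator S) ℓ = 0 := by
  obtain ⟨-, -, -, -, hmax⟩ := hℓ
  rw [sep_hypersimplexVertices] at hmax
  have hinj := finsetIndicator_injective (ι := ι).image_injective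
  have hPZ := hinj (hmax _ hP (fun h => ?_) (Set.image_mono fun S hS => ⟨hS.1, hZP S hS.1 hS.2⟩))
  · intro S hS hPS
    have hSP : S ∈ {S | S.card = k ∧ P S} := ⟨hS, hPS⟩
    rw [hPZ] at hSP
    exact hSP.2
  · obtain ⟨S, hS, hPS⟩ := hPV
    have hSk : S ∈ {S : Finset ι | S.card = k} := hS
    rw [← hinj h] at hSk
    exact hPS hSk.2

theorem ncard_image_le_two_of_isFacetDefining [Fintype ι] [DecidableEq ι] (hk0 : 0 < k)
    (hkn : k < Fintype.card ι)
    {ℓ : MvPolynomial ι ℝ} (hℓ : IsFacetDefining (hypersimplexVertices ι k) ℓ) :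
    ((fun v => eval v ℓ) '' hypersimplexVertices ι k).ncard ≤ 2 := by
  have hL := eval_finsetIndicator hℓ.1
  obtain ⟨i, hi⟩ := exists_forall_ne_eq_of_maximal hk0 hkn hL
    (fun S hS => hℓ.2.1 _ ⟨S, hS, rfl⟩)
    (by
      by_contra! h
      refine hℓ.2.2.2.1 (Set.sep_eq_self_iff_mem_true.2 ?_)
      rintro _ ⟨S, hS, rfl⟩
      exact h S hS)
    (fun i => hℓ.forall_eq_zero_of_forall_imp (isFaceOf_hypersimplexVertices_mem i)
      (exists_card_eq_and_notMem hkn i))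
    (fun i => hℓ.forall_eq_zero_of_forall_imp (isFaceOf_hypersimplexVertices_notMem i)
      (by simpa using exists_card_eq_and_mem hk0 hkn.le i))
  obtain ⟨j₀, hj₀⟩ := Fintype.exists_ne_of_one_lt_card (by omega) i
  obtain ⟨x, y, hxy⟩ := exists_forall_sum_eq_or_eq_of_forall_ne_eq (fun j hj => hi j j₀ hj hj₀) k
  rw [hypersimplexVertices, Set.image_image]
  refine (Set.ncard_le_ncard (t := {coeff 0 ℓ + x, coeff 0 ℓ + y}) ?_).trans
    ((Set.ncard_insert_le _ _).trans (by simp))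
  rintro _ ⟨S, hS, rfl⟩
  rcases hxy S hS with h | h <;> simp [hL, h]

theorem hypersimplexVertices_subsingleton [Fintype ι] (hk : k = 0 ∨ Fintype.card ι ≤ k) :
    (hypersimplexVertices ι k).Subsingleton := by
  have hS : ∀ S : Finset ι, S.card = k → S = if k = 0 then ∅ else Finset.univ := fun S hS => by
    split_ifs with h
    · exact Finset.card_eq_zero.1 (hS.trans h)
    · exact Finset.eq_univ_of_card S
        (le_antisymm (Finset.card_le_univ S) (hS ▸ hk.resolve_left h))
  rintro _ ⟨S, hSk, rfl⟩ _ ⟨T, hTk, rfl⟩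
  rw [hS S hSk, hS T hTk]

theorem levelness_hypersimplexVertices_le_two [Fintype ι] [DecidableEq ι] :
    levelness (hypersimplexVertices ι k) ≤ 2 := by
  refine Nat.sInf_le fun ℓ hℓ => ?_
  by_cases hk : 0 < k ∧ k < Fintype.card ι
  · exact ncard_image_le_two_of_isFacetDefining hk.1 hk.2 hℓ
  · have := (hypersimplexVertices_subsingleton (ι := ι) (k := k) (by omega)).image
      fun v => eval v ℓ
    exact ((Set.ncard_le_one_iff this.finite).2 fun ha hb => this ha hb).trans one_le_two

end Hypersimplex

theorem uniform_matroid_two_level_general {n k : ℕ} (hk : k ≤ n)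
    (M : Matroid (Fin n))
    (hB : ∀ B, M.IsBase B ↔ B.ncard = k) :
    levelness (baseConfig M) ≤ 2 ∧ thetaRank (baseConfig M) ≤ 1 := by
  rw [baseConfig_eq_hypersimplexVertices hB]
  exact ⟨levelness_hypersimplexVertices_le_two,
    thetaRank_hypersimplexVertices_le_one (by simpa using hk)⟩

/-- Every uniform matroid `U_{n,k}` (the matroid on `{1,…,n}` whose bases
are all `k`-element subsets, `0 ≤ k ≤ n`) is 2-level, and consequently has Theta rank at
most 1. -/
theorem uniform_matroid_two_level {n k : ℕ} (hk : k ≤ n)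
    (M : Matroid (Fin n)) (hE : M.E = Set.univ)
    (hB : ∀ B, M.IsBase B ↔ B.ncard = k) :
    levelness (baseConfig M) ≤ 2 ∧ thetaRank (baseConfig M) ≤ 1 :=
  uniform_matroid_two_level_general hk M hB
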